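/- For every real x with 0 < x ≤ 1, the function t ↦ ln_t(x) = (x^t − 1)/t is concave on (0, ∞). -/

import Mathlib

/-!
For `t > 0` we have `(xᵗ - 1)/t = -∫_x^1 y^(t-1) dy`. Each `t ↦ y^(t-1)` with `y > 0` is convex,
and an integral of convex functions is convex, so `ln_t(x)` is the negative of a convex function.
-/

open MeasureTheory Set

theorem convexOn_integral {α E : Type*} [MeasurableSpace α] {μ : Measure α}
    [AddCommGroup E] [Module ℝ E] {s : Set E} {F : α → E → ℝ} (hs : Convex ℝ s)
    (hF : ∀ᵐ y ∂μ, ConvexOn ℝ s (F y)) (hint : ∀ t ∈ s, Integrable (F · t) μ) :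
    ConvexOn ℝ s fun t => ∫ y, F y t ∂μ := by
  refine ⟨hs, fun t ht t' ht' a b ha hb hab => ?_⟩
  have hat : Integrable (fun y => a • F y t) μ := (hint t ht).smul a
  have hbt' : Integrable (fun y => b • F y t') μ := (hint t' ht').smul b
  calc ∫ y, F y (a • t + b • t') ∂μ ≤ ∫ y, (a • F y t + b • F y t') ∂μ :=
        integral_mono_ae (hint _ (hs ht ht' ha hb hab)) (hat.add hbt')
          (hF.mono fun y hy => hy.2 ht ht' ha hb hab)
    _ = a • ∫ y, F y t ∂μ + b • ∫ y, F y t' ∂μ := by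
        rw [integral_add hat hbt', integral_smul, integral_smul]

theorem Real.convexOn_rpow_sub_one_left {y : ℝ} (hy : 0 < y) :
    ConvexOn ℝ univ fun t : ℝ => y ^ (t - 1) := by
  simpa [Function.comp_def, neg_add_eq_sub] using (convexOn_rpow_left hy).translate_right (-1)

theorem Real.rpow_sub_one_div_eq_integral (x : ℝ) {t : ℝ} (ht : 0 < t) :
    (x ^ t - 1) / t = ∫ y in (1 : ℝ)..x, y ^ (t - 1) := by
  rw [integral_rpow (Or.inl (by linarith))]
  simp

theorem convexOn_integral_rpow_sub_one {a b : ℝ} (ha : 0 ≤ a) (hab : a ≤ b) :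
    ConvexOn ℝ (Ioi 0) fun t : ℝ => ∫ y in a..b, y ^ (t - 1) := by
  simp_rw [intervalIntegral.integral_of_le hab]
  refine convexOn_integral (convex_Ioi 0) ?_ fun t ht => ?_
  · exact (ae_restrict_iff' measurableSet_Ioc).2 <| ae_of_all _ fun y hy =>
      (Real.convexOn_rpow_sub_one_left (ha.trans_lt hy.1)).subset (subset_univ _) (convex_Ioi 0)
  · exact (intervalIntegral.intervalIntegrable_rpow' (by linarith [mem_Ioi.1 ht])).1

theorem stmt14 (x : ℝ) (hx0 : 0 < x) (hx1 : x ≤ 1) :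
    ConcaveOn ℝ (Set.Ioi (0 : ℝ)) (fun t : ℝ => (x ^ t - 1) / t) := by
  refine (convexOn_integral_rpow_sub_one hx0.le hx1).neg.congr fun t ht => ?_
  rw [Real.rpow_sub_one_div_eq_integral x ht, intervalIntegral.integral_symm]
  rfl
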